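/- Detailed balance of the full Swendsen–Wang kernel: define the one-step Swendsen–Wang transition probability K(s,t) = Σ_{w : E(G)→{0,1}} P(s,w) · Q(w,t). Then for all spin configurations s and t on a finite simple graph G, W_V(s) · K(s,t) = W_V(t) · K(t,s). -/

import Mathlib

open Classical

noncomputable section

variable {V : Type*} [Fintype V] [DecidableEq V]

/-- Product `s i * s j` of spins over an unordered edge `{i, j}`. -/
def pairProd (s : V → ℝ) : Sym2 V → ℝ :=
  Sym2.lift ⟨fun i j => s i * s j, fun _ _ => mul_comm _ _⟩

/-- Unnormalized Gibbs weight
`W_V(s) = exp (β Σ_{{i,j} ∈ E} s_i s_j + β Σ_i h_i s_i)`. -/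
def WV (G : SimpleGraph V) [DecidableRel G.Adj] (β : ℝ) (h : V → ℝ) (s : V → ℝ) : ℝ :=
  Real.exp (β * ∑ e ∈ G.edgeFinset, pairProd s e + β * ∑ i : V, h i * s i)

/-- Edge factor of the joint vertex-edge weight:
`(1 - e^{-2β})` if `w_{ij} = 1` and `s_i = s_j`, `e^{-2β}` if `w_{ij} = 0`, else `0`. -/
def edgeFactorVE (β : ℝ) (s : V → ℝ) (b : Bool) : Sym2 V → ℝ :=
  Sym2.lift ⟨fun i j =>
    if b then (if s i = s j then 1 - Real.exp (-2 * β) else 0) else Real.exp (-2 * β),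
    by intro i j; by_cases hb : b <;> simp [hb, eq_comm]⟩

/-- Unnormalized joint vertex-edge weight `W_VE(s, w)`. -/
def WVE (G : SimpleGraph V) [DecidableRel G.Adj] (β : ℝ) (h : V → ℝ) (s : V → ℝ)
    (w : G.edgeSet → Bool) : ℝ :=
  (∏ e : G.edgeSet, edgeFactorVE β s (w e) e.val) * Real.exp (β * ∑ i : V, h i * s i)

/-- Edge factor of the Swendsen-Wang edge-step probability: if `s_i = s_j` then
`(1 - e^{-2β})` for `w_{ij} = 1` and `e^{-2β}` for `w_{ij} = 0`; otherwise `0` for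
`w_{ij} = 1` and `1` for `w_{ij} = 0`. -/
def edgeFactorP (β : ℝ) (s : V → ℝ) (b : Bool) : Sym2 V → ℝ :=
  Sym2.lift ⟨fun i j =>
    if s i = s j then (if b then 1 - Real.exp (-2 * β) else Real.exp (-2 * β))
    else (if b then 0 else 1),
    by intro i j; simp [eq_comm]⟩

/-- Swendsen-Wang edge-step probability `P(s, w)`. -/
def swP (G : SimpleGraph V) [DecidableRel G.Adj] (β : ℝ) (s : V → ℝ)
    (w : G.edgeSet → Bool) : ℝ :=
  ∏ e : G.edgeSet, edgeFactorP β s (w e) e.val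

/-- Spanning subgraph of `G` whose edges are the edges `e` with `w e = 1`. -/
def openSubgraph (G : SimpleGraph V) [DecidableRel G.Adj] (w : G.edgeSet → Bool) :
    SimpleGraph V where
  Adj i j := ∃ hij : G.Adj i j, w ⟨Sym2.mk i j, G.mem_edgeSet.mpr hij⟩ = true
  symm := ⟨by
    rintro i j ⟨hij, hw⟩
    refine ⟨hij.symm, ?_⟩
    have he : (⟨Sym2.mk j i, G.mem_edgeSet.mpr hij.symm⟩ : G.edgeSet)
        = ⟨Sym2.mk i j, G.mem_edgeSet.mpr hij⟩ := Subtype.ext (Sym2.eq_swap)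
    rw [he]; exact hw⟩
  loopless := ⟨by rintro i ⟨hij, -⟩; exact G.irrefl hij⟩

/-- `h_γ = Σ_{i ∈ γ} h_i`: sum of the field over a connected component `γ ∈ C_w`. -/
def hComp (G : SimpleGraph V) [DecidableRel G.Adj] (h : V → ℝ) (w : G.edgeSet → Bool)
    (γ : (openSubgraph G w).ConnectedComponent) : ℝ :=
  ∑ i ∈ Finset.univ.filter (fun i => (openSubgraph G w).connectedComponentMk i = γ), h i

/-- A configuration is compatible with the edge configuration `w` if it is constant on each
connected component of the subgraph of open edges. -/
def Compatible (G : SimpleGraph V) [DecidableRel G.Adj] (w : G.edgeSet → Bool)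
    (t : V → ℝ) : Prop :=
  ∀ i j : V, (openSubgraph G w).connectedComponentMk i = (openSubgraph G w).connectedComponentMk j
    → t i = t j

/-- Swendsen-Wang spin-step probability `Q(w, t)`: for `t` compatible with `w`, the product
over components `γ ∈ C_w` of `e^{β h_γ τ_γ} / (e^{β h_γ} + e^{-β h_γ})`, where
`τ_γ = t γ.out` is the common value of `t` on `γ`; and `0` for incompatible `t`. -/
def swQ (G : SimpleGraph V) [DecidableRel G.Adj] (β : ℝ) (h : V → ℝ) (w : G.edgeSet → Bool)
    (t : V → ℝ) : ℝ :=
  if Compatible G w t then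
    ∏ γ : (openSubgraph G w).ConnectedComponent,
      Real.exp (β * hComp G h w γ * t γ.out) /
        (Real.exp (β * hComp G h w γ) + Real.exp (-(β * hComp G h w γ)))
  else 0

/-- Unnormalized edge weight
`W_E(w) = Π_{w_e = 1} (1 - e^{-2β}) · Π_{w_e = 0} e^{-2β} · Π_{γ ∈ C_w} (e^{β h_γ} + e^{-β h_γ})`. -/
def WE (G : SimpleGraph V) [DecidableRel G.Adj] (β : ℝ) (h : V → ℝ)
    (w : G.edgeSet → Bool) : ℝ :=
  (∏ _e ∈ Finset.univ.filter (fun e : G.edgeSet => w e = true), (1 - Real.exp (-2 * β))) *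
  (∏ _e ∈ Finset.univ.filter (fun e : G.edgeSet => w e = false), Real.exp (-2 * β)) *
  ∏ γ : (openSubgraph G w).ConnectedComponent,
    (Real.exp (β * hComp G h w γ) + Real.exp (-(β * hComp G h w γ)))

/-! The Edwards–Sokal joint weight `W_VE(s, w)` factors both ways:
`W_V(s) P(s, w) = e^{β|E|} W_VE(s, w) = e^{β|E|} W_E(w) Q(w, s)`. Hence
`W_V(s) P(s, w) Q(w, t) = e^{β|E|} W_E(w) Q(w, s) Q(w, t)` is symmetric in `s` and `t`,
and summing over `w` gives detailed balance. -/

lemma mul_eq_ite_of_sign {a b : ℝ} (ha : a = 1 ∨ a = -1) (hb : b = 1 ∨ b = -1) :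
    a * b = if a = b then 1 else -1 := by
  rcases ha with rfl | rfl <;> rcases hb with rfl | rfl <;> norm_num

section EdgeStep

variable {β : ℝ} {s : V → ℝ}

omit [Fintype V] [DecidableEq V] in
lemma exp_pairProd_mul_edgeFactorP (hs : ∀ i, s i = 1 ∨ s i = -1) (b : Bool) (e : Sym2 V) :
    Real.exp (β * pairProd s e) * edgeFactorP β s b e = Real.exp β * edgeFactorVE β s b e := by
  induction e using Sym2.ind with
  | _ i j =>
    simp only [pairProd, edgeFactorP, edgeFactorVE, Sym2.lift_mk,
      mul_eq_ite_of_sign (hs i) (hs j)]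
    by_cases hij : s i = s j
    · cases b <;> simp [hij]
    · cases b <;> simp [hij, ← Real.exp_add]
      ring_nf

omit [DecidableEq V] in
lemma WV_mul_swP (G : SimpleGraph V) [DecidableRel G.Adj] (h : V → ℝ)
    (hs : ∀ i, s i = 1 ∨ s i = -1) (w : G.edgeSet → Bool) :
    WV G β h s * swP G β s w = Real.exp β ^ Fintype.card G.edgeSet * WVE G β h s w := by
  have hsum : ∑ e ∈ G.edgeFinset, pairProd s e = ∑ e : G.edgeSet, pairProd s e.val := by
    rw [SimpleGraph.edgeFinset, ← Finset.sum_set_coe]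
  have hedges : (∏ e : G.edgeSet, Real.exp (β * pairProd s e.val)) * swP G β s w
      = Real.exp β ^ Fintype.card G.edgeSet * ∏ e : G.edgeSet, edgeFactorVE β s (w e) e.val := by
    rw [swP, ← Finset.prod_mul_distrib,
      Finset.prod_congr rfl fun e _ => exp_pairProd_mul_edgeFactorP hs (w e) e.val,
      Finset.prod_mul_distrib, Finset.prod_const, Finset.card_univ]
  rw [WV, WVE, Real.exp_add, hsum, Finset.mul_sum, Real.exp_sum, mul_right_comm, hedges]
  ring

end EdgeStep

section SpinStep

variable {G : SimpleGraph V} [DecidableRel G.Adj] {w : G.edgeSet → Bool} {s : V → ℝ}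

omit [Fintype V] [DecidableEq V] in
lemma Compatible.eq_of_adj (hc : Compatible G w s) {i j : V}
    (hij : (openSubgraph G w).Adj i j) : s i = s j :=
  hc i j (SimpleGraph.ConnectedComponent.sound hij.reachable)

omit [Fintype V] [DecidableEq V] in
lemma compatible_of_forall_adj (H : ∀ i j, (openSubgraph G w).Adj i j → s i = s j) :
    Compatible G w s := by
  intro i j hij
  obtain ⟨p⟩ := SimpleGraph.ConnectedComponent.exact hij
  by_contra hne
  obtain ⟨d, -, hd, hd'⟩ := p.exists_boundary_dart {k | s k = s i} rfl (Ne.symm hne)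
  exact hd' ((H _ _ d.adj).symm.trans hd)

omit [DecidableEq V] in
lemma prod_edgeFactorVE_of_compatible (β : ℝ) (hc : Compatible G w s) :
    ∏ e : G.edgeSet, edgeFactorVE β s (w e) e.val
      = (∏ _e ∈ Finset.univ.filter (fun e : G.edgeSet => w e = true), (1 - Real.exp (-2 * β))) *
        ∏ _e ∈ Finset.univ.filter (fun e : G.edgeSet => w e = false), Real.exp (-2 * β) := by
  have hfactor : ∀ e : G.edgeSet, edgeFactorVE β s (w e) e.val
      = if w e = true then 1 - Real.exp (-2 * β) else Real.exp (-2 * β) := by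
    rintro ⟨e, he⟩
    induction e using Sym2.ind with
    | _ i j =>
      cases hw : w ⟨s(i, j), he⟩
      · simp [edgeFactorVE]
      · simp [edgeFactorVE, hc.eq_of_adj ⟨G.mem_edgeSet.mp he, hw⟩]
  simp only [hfactor, Finset.prod_ite, Bool.not_eq_true]

lemma sum_field_mul_eq_sum_hComp (h : V → ℝ) (hc : Compatible G w s) :
    ∑ i, h i * s i = ∑ γ : (openSubgraph G w).ConnectedComponent, hComp G h w γ * s γ.out := by
  rw [← Finset.sum_fiberwise Finset.univ (openSubgraph G w).connectedComponentMk]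
  refine Finset.sum_congr rfl fun γ _ => ?_
  rw [hComp, Finset.sum_mul]
  refine Finset.sum_congr rfl fun i hi => ?_
  rw [hc i γ.out ((Finset.mem_filter.mp hi).2.trans (Quot.out_eq γ).symm)]

omit [DecidableEq V] in
lemma WVE_eq_zero_of_not_compatible (β : ℝ) (h : V → ℝ) (hc : ¬Compatible G w s) :
    WVE G β h s w = 0 := by
  obtain ⟨i, j, ⟨hij, hw⟩, hne⟩ : ∃ i j, (openSubgraph G w).Adj i j ∧ s i ≠ s j := by
    by_contra! H
    exact hc (compatible_of_forall_adj H)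
  rw [WVE, Finset.prod_eq_zero (Finset.mem_univ ⟨s(i, j), G.mem_edgeSet.mpr hij⟩)
    (by simp [edgeFactorVE, hw, hne]), zero_mul]

lemma WVE_eq_WE_mul_swQ (β : ℝ) (h : V → ℝ) : WVE G β h s w = WE G β h w * swQ G β h w s := by
  by_cases hc : Compatible G w s
  · have hZ : ∀ γ : (openSubgraph G w).ConnectedComponent,
        Real.exp (β * hComp G h w γ) + Real.exp (-(β * hComp G h w γ)) ≠ 0 :=
      fun γ => by positivity
    have hcomp : (∏ γ, (Real.exp (β * hComp G h w γ) + Real.exp (-(β * hComp G h w γ)))) *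
        (∏ γ, Real.exp (β * hComp G h w γ * s γ.out) /
          (Real.exp (β * hComp G h w γ) + Real.exp (-(β * hComp G h w γ))))
        = ∏ γ, Real.exp (β * (hComp G h w γ * s γ.out)) := by
      rw [← Finset.prod_mul_distrib]
      exact Finset.prod_congr rfl fun γ _ => by rw [mul_div_cancel₀ _ (hZ γ), mul_assoc]
    rw [WVE, WE, swQ, if_pos hc, prod_edgeFactorVE_of_compatible β hc,
      sum_field_mul_eq_sum_hComp h hc, Finset.mul_sum, Real.exp_sum, ← hcomp]
    ring
  · rw [swQ, if_neg hc, mul_zero, WVE_eq_zero_of_not_compatible β h hc]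

end SpinStep

lemma WV_mul_swP_eq_WE_mul_swQ (G : SimpleGraph V) [DecidableRel G.Adj] (β : ℝ) (h : V → ℝ)
    {s : V → ℝ} (hs : ∀ i, s i = 1 ∨ s i = -1) (w : G.edgeSet → Bool) :
    WV G β h s * swP G β s w
      = Real.exp β ^ Fintype.card G.edgeSet * (WE G β h w * swQ G β h w s) := by
  rw [WV_mul_swP G h hs w, WVE_eq_WE_mul_swQ β h]

theorem swendsenWang_detailed_balance_general (G : SimpleGraph V) [DecidableRel G.Adj]
    (β : ℝ) (h : V → ℝ) (s t : V → ℝ)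
    (hs : ∀ i, s i = 1 ∨ s i = -1) (ht : ∀ i, t i = 1 ∨ t i = -1) :
    WV G β h s * (∑ w : G.edgeSet → Bool, swP G β s w * swQ G β h w t)
      = WV G β h t * (∑ w : G.edgeSet → Bool, swP G β t w * swQ G β h w s) := by
  rw [Finset.mul_sum, Finset.mul_sum]
  refine Finset.sum_congr rfl fun w _ => ?_
  rw [← mul_assoc, ← mul_assoc, WV_mul_swP_eq_WE_mul_swQ G β h hs,
    WV_mul_swP_eq_WE_mul_swQ G β h ht]
  ring

/-- Detailed balance of the full Swendsen-Wang kernel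
`K(s, t) = Σ_w P(s, w) · Q(w, t)`: for all spin configurations `s`, `t`,
`W_V(s) · K(s, t) = W_V(t) · K(t, s)`. -/
theorem swendsenWang_detailed_balance (G : SimpleGraph V) [DecidableRel G.Adj]
    (β : ℝ) (hβ : 0 < β) (h : V → ℝ) (s t : V → ℝ)
    (hs : ∀ i, s i = 1 ∨ s i = -1) (ht : ∀ i, t i = 1 ∨ t i = -1) :
    WV G β h s * (∑ w : G.edgeSet → Bool, swP G β s w * swQ G β h w t)
      = WV G β h t * (∑ w : G.edgeSet → Bool, swP G β t w * swQ G β h w s) :=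
  swendsenWang_detailed_balance_general G β h s t hs ht

end
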